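/- For any integer m ≥ 1 and reals ε ∈ (0,1), B > 1, there exists a constant C > 1, depending only on (ε, B, m), such that the following holds. Let (q₀^{(k)}, q₁^{(k)}), k = 1, …, m, be real pairs satisfying q₀^{(1)} ≤ −ε and max_{1≤k≤m}(|q₀^{(k)}| + |q₁^{(k)}|) ≤ B, and let Q = (𝐪^{(k)}) be its consistent extension. Let Q̃ = (q̃_j^{(k)})_{1≤k≤m, 0≤j≤k} be any real array with q̃₀^{(k)} = q₀^{(k)} and q̃₁^{(k)} = q₁^{(k)} for each k, and with |q̃_j^{(k)}| ≤ B for all 1 ≤ k ≤ m, 0 ≤ j ≤ k. Then for each k ∈ {1, …, m}: ‖𝐪^{(k)} − 𝐪̃^{(k)}‖ ≤ C·∑_{h=2}^{k}∑_{i=0}^{h−2} |∂_t^i ∂_x^{h−i−2} D_{Q̃}(0,0)|, where 𝐪^{(k)} = (q₀^{(k)},…,q_k^{(k)}) ∈ ℝ^{k+1}, 𝐪̃^{(k)} = (q̃₀^{(k)},…,q̃_k^{(k)}), and ‖·‖ is the Euclidean norm. -/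

import Mathlib

open Real Set MeasureTheory Filter
open scoped ENNReal

noncomputable section

/-- The partial derivative of `F : ℝ × ℝ → ℝ` in its first (time) variable. -/
def pdT (F : ℝ × ℝ → ℝ) : ℝ × ℝ → ℝ := fun z => deriv (fun s => F (s, z.2)) z.1

/-- The partial derivative of `F : ℝ × ℝ → ℝ` in its second (space) variable. -/
def pdX (F : ℝ × ℝ → ℝ) : ℝ × ℝ → ℝ := fun z => deriv (fun s => F (z.1, s)) z.2

/-- The iterated partial derivative `∂_t^i ∂_x^j F`. -/
def pdIter (F : ℝ × ℝ → ℝ) (i j : ℕ) : ℝ × ℝ → ℝ := pdT^[i] (pdX^[j] F)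

/-- The nonlinear second-order operator appearing in equation (B):
`(∂_x F)² ∂_t² F − 2 (∂_t F)(∂_x F) ∂_t∂_x F + ((∂_t F)² + π² (∂_x F)⁴) ∂_x² F`. -/
def BExpr (F : ℝ × ℝ → ℝ) (z : ℝ × ℝ) : ℝ :=
  (pdX F z) ^ 2 * pdT (pdT F) z - 2 * pdT F z * pdX F z * pdT (pdX F) z +
    ((pdT F z) ^ 2 + π ^ 2 * (pdX F z) ^ 4) * pdX (pdX F) z

/-- `F` satisfies equation (B) on `Ω`. -/
def SatisfiesB (F : ℝ × ℝ → ℝ) (Ω : Set (ℝ × ℝ)) : Prop := ∀ z ∈ Ω, BExpr F z = 0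

/-- `G` satisfies equation (E) on `R`:  `∂_y G ≠ 0` and
`∂_t² G + π² (∂_y G)⁻⁴ ∂_y² G = 0` at every point of `R`. -/
def SatisfiesE (G : ℝ × ℝ → ℝ) (R : Set (ℝ × ℝ)) : Prop :=
  ∀ z ∈ R, pdX G z ≠ 0 ∧
    pdT (pdT G) z + π ^ 2 * ((pdX G z) ^ 4)⁻¹ * pdX (pdX G) z = 0

/-- Admissible functions on `R`: continuous on `closure R`, differentiable on `R`, with
strictly negative partial derivative in the second variable. -/
def Adm (F : ℝ × ℝ → ℝ) (R : Set (ℝ × ℝ)) : Prop :=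
  ContinuousOn F (closure R) ∧ DifferentiableOn ℝ F R ∧ ∀ z ∈ R, pdX F z < 0

/-- `ε`-admissible functions on `R`: the partial derivative in the second variable lies
strictly between `-ε⁻¹` and `-ε`. -/
def AdmE (ε : ℝ) (F : ℝ × ℝ → ℝ) (R : Set (ℝ × ℝ)) : Prop :=
  ContinuousOn F (closure R) ∧ DifferentiableOn ℝ F R ∧
    ∀ z ∈ R, -ε⁻¹ < pdX F z ∧ pdX F z < -ε

/-- The `C^m` norm `∑_{j=0}^m max_{i ≤ j} sup_{z ∈ R} |∂_t^i ∂_x^{j-i} F(z)|`,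
valued in `ℝ≥0∞`. -/
def CmNorm (m : ℕ) (F : ℝ × ℝ → ℝ) (R : Set (ℝ × ℝ)) : ℝ≥0∞ :=
  ∑ j ∈ Finset.range (m + 1),
    ⨆ i ∈ Finset.range (j + 1), ⨆ z ∈ R, ENNReal.ofReal |pdIter F i (j - i) z|

/-- The one-dimensional `C^m` norm `∑_{j=0}^m sup_{x ∈ S} |f^{(j)}(x)|`, valued in `ℝ≥0∞`. -/
def CmNorm1 (m : ℕ) (f : ℝ → ℝ) (S : Set ℝ) : ℝ≥0∞ :=
  ∑ j ∈ Finset.range (m + 1), ⨆ x ∈ S, ENNReal.ofReal |deriv^[j] f x|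

/-- `R` has `C^k` boundary. -/
def HasCkBoundary (k : ℕ) (R : Set (ℝ × ℝ)) : Prop :=
  ∀ z₀ ∈ frontier R, ∃ (r : ℝ) (ψ ψinv : ℝ × ℝ → ℝ × ℝ), 0 < r ∧
    Set.InjOn ψ (Metric.ball z₀ r) ∧
    (∀ w ∈ Metric.ball z₀ r ∩ R, 0 < (ψ w).1) ∧
    (∀ w ∈ Metric.ball z₀ r ∩ frontier R, (ψ w).1 = 0) ∧
    ContDiffOn ℝ k ψ (Metric.ball z₀ r) ∧
    ContDiffOn ℝ k ψinv (ψ '' (Metric.ball z₀ r ∩ R)) ∧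
    ∀ w ∈ Metric.ball z₀ r, ψinv (ψ w) = w

/-- The set `𝔇_r = {z ∈ R : dist(z, ∂R ∖ ∂R') > r}`. -/
def Dset (r : ℝ) (R R' : Set (ℝ × ℝ)) : Set (ℝ × ℝ) :=
  {z ∈ R | ENNReal.ofReal r < EMetric.infEdist z (frontier R \ frontier R')}

/-- The polynomial `A_Q(t,x) = ∑_{k=1}^m ∑_{j=0}^k (q_j^{(k)}/(j!(k−j)!)) t^j x^{k−j}`
associated with an array `Q = (q k j)`. -/
def AQ (m : ℕ) (q : ℕ → ℕ → ℝ) : ℝ × ℝ → ℝ := fun z =>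
  ∑ k ∈ Finset.Icc 1 m, ∑ j ∈ Finset.range (k + 1),
    (q k j / ((Nat.factorial j : ℝ) * (Nat.factorial (k - j) : ℝ))) * z.1 ^ j * z.2 ^ (k - j)

/-- The function `D_Q` obtained by applying the operator of equation (B) to `A_Q`. -/
def DQ (m : ℕ) (q : ℕ → ℕ → ℝ) : ℝ × ℝ → ℝ := fun z => BExpr (AQ m q) z

/-- The array `Q = (q k j)` (entries with `1 ≤ k ≤ m`, `0 ≤ j ≤ k` being relevant)
is consistent: `q_0^{(1)} < 0` and `∂_t^i ∂_x^j D_Q(0,0) = 0` whenever `i + j ≤ m − 2`. -/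
def ConsistentArr (m : ℕ) (q : ℕ → ℕ → ℝ) : Prop :=
  q 1 0 < 0 ∧ ∀ i j : ℕ, i + j + 2 ≤ m → pdIter (DQ m q) i j (0, 0) = 0

/-- `q` is the consistent extension of the sequence of pairs `(q0 k, q1 k)`, `1 ≤ k ≤ m`. -/
def IsConsistentExtension (m : ℕ) (q0 q1 : ℕ → ℝ) (q : ℕ → ℕ → ℝ) : Prop :=
  ConsistentArr m q ∧ ∀ k, 1 ≤ k → k ≤ m → q k 0 = q0 k ∧ q k 1 = q1 k

namespace S18

open MvPolynomial

abbrev Rq := MvPolynomial (ℕ × ℕ) ℝ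
abbrev B2 := MvPolynomial (Fin 2) Rq

def dT : B2 → B2 := fun p => pderiv 0 p
def dX : B2 → B2 := fun p => pderiv 1 p

/-- normalized corner coefficient of iterated derivative -/
def cc (P : B2) (i j : ℕ) : Rq := constantCoeff (dT^[i] (dX^[j] P))

lemma pderiv_comm' {R : Type*} [CommSemiring R] {σ : Type*} [DecidableEq σ] (a b : σ) (p : MvPolynomial σ R) :
    pderiv a (pderiv b p) = pderiv b (pderiv a p) := by
  induction p using MvPolynomial.induction_on with
  | C r => simp
  | add p q hp hq => simp [hp, hq]
  | mul_X p n ih =>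
    rcases eq_or_ne n a with rfl | ha <;> rcases eq_or_ne n b with rfl | hb <;>
      simp [pderiv_mul, ih, pderiv_X_self, pderiv_X_of_ne, *] <;> ring

lemma dX_dT (P : B2) : dX (dT P) = dT (dX P) := by
  simpa [dX, dT] using pderiv_comm' (1 : Fin 2) 0 P

lemma dT_zero : dT (0 : B2) = 0 := by simp [dT]
lemma dX_zero : dX (0 : B2) = 0 := by simp [dX]
lemma dT_add (P Q : B2) : dT (P + Q) = dT P + dT Q := by simp [dT]
lemma dX_add (P Q : B2) : dX (P + Q) = dX P + dX Q := by simp [dX]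

lemma iter_dT_zero (i : ℕ) : dT^[i] (0 : B2) = 0 := Function.iterate_fixed dT_zero i
lemma iter_dX_zero (j : ℕ) : dX^[j] (0 : B2) = 0 := Function.iterate_fixed dX_zero j

lemma iter_dT_add (i : ℕ) (P Q : B2) : dT^[i] (P + Q) = dT^[i] P + dT^[i] Q := by
  induction i generalizing P Q with
  | zero => simp
  | succ i ih => simp [Function.iterate_succ_apply, dT_add, ih]

lemma iter_dX_add (j : ℕ) (P Q : B2) : dX^[j] (P + Q) = dX^[j] P + dX^[j] Q := by
  induction j generalizing P Q with
  | zero => simp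
  | succ j ih => simp [Function.iterate_succ_apply, dX_add, ih]

lemma cc_zero (i j : ℕ) : cc 0 i j = 0 := by simp [cc, iter_dX_zero, iter_dT_zero]

lemma cc_add (P Q : B2) (i j : ℕ) : cc (P + Q) i j = cc P i j + cc Q i j := by
  simp [cc, iter_dX_add, iter_dT_add]

lemma cc_sum {α : Type*} (s : Finset α) (f : α → B2) (i j : ℕ) :
    cc (∑ x ∈ s, f x) i j = ∑ x ∈ s, cc (f x) i j := by
  classical
  induction s using Finset.induction with
  | empty => simp [cc_zero]
  | insert _ _ hx ih => simp [Finset.sum_insert hx, cc_add, ih]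

lemma cc_neg (P : B2) (i j : ℕ) : cc (-P) i j = - cc P i j := by
  have h : cc (-P) i j + cc P i j = 0 := by rw [← cc_add]; simp [cc_zero]
  exact eq_neg_of_add_eq_zero_left h

lemma cc_sub (P Q : B2) (i j : ℕ) : cc (P - Q) i j = cc P i j - cc Q i j := by
  rw [sub_eq_add_neg, cc_add, cc_neg]; ring

lemma iter_dX_dT (j : ℕ) (P : B2) : dX^[j] (dT P) = dT (dX^[j] P) := by
  induction j generalizing P with
  | zero => simp
  | succ j ih => rw [Function.iterate_succ_apply, dX_dT, ih, Function.iterate_succ_apply]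

lemma cc_succ_right (P : B2) (i j : ℕ) : cc P i (j + 1) = cc (dX P) i j := by
  simp [cc, Function.iterate_succ_apply]

lemma cc_succ_left (P : B2) (i j : ℕ) : cc P (i + 1) j = cc (dT P) i j := by
  simp [cc, iter_dX_dT, Function.iterate_succ_apply]

lemma cc_mul_zero (P Q : B2) : cc (P * Q) 0 0 = cc P 0 0 * cc Q 0 0 := by
  simp [cc]

lemma dT_mul (P Q : B2) : dT (P * Q) = dT P * Q + P * dT Q := by
  simp [dT, pderiv_mul]; ring
lemma dX_mul (P Q : B2) : dX (P * Q) = dX P * Q + P * dX Q := by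
  simp [dX, pderiv_mul]; ring

lemma cc_mul_succ_right (P Q : B2) (i j : ℕ) :
    cc (P * Q) i (j + 1) = cc (dX P * Q) i j + cc (P * dX Q) i j := by
  rw [cc_succ_right, dX_mul, cc_add]

lemma cc_mul_succ_left (P Q : B2) (i j : ℕ) :
    cc (P * Q) (i + 1) j = cc (dT P * Q) i j + cc (P * dT Q) i j := by
  rw [cc_succ_left, dT_mul, cc_add]

/-- basic monomial -/
def mon (r : Rq) (a b : ℕ) : B2 := C r * X 0 ^ a * X 1 ^ b

lemma dT_natCast_mul (n : ℕ) (x : B2) : dT ((n : B2) * x) = (n : B2) * dT x := by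
  rw [← map_natCast (C : Rq →+* B2) n]; simp [dT, pderiv_C_mul]

lemma dX_natCast_mul (n : ℕ) (x : B2) : dX ((n : B2) * x) = (n : B2) * dX x := by
  rw [← map_natCast (C : Rq →+* B2) n]; simp [dX, pderiv_C_mul]

lemma iter_dT_natCast_mul (i n : ℕ) (x : B2) :
    dT^[i] ((n : B2) * x) = (n : B2) * dT^[i] x := by
  induction i generalizing x with
  | zero => simp
  | succ i ih => rw [Function.iterate_succ_apply, dT_natCast_mul, ih,
      Function.iterate_succ_apply]

lemma iter_dX_natCast_mul (j n : ℕ) (x : B2) :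
    dX^[j] ((n : B2) * x) = (n : B2) * dX^[j] x := by
  induction j generalizing x with
  | zero => simp
  | succ j ih => rw [Function.iterate_succ_apply, dX_natCast_mul, ih,
      Function.iterate_succ_apply]

lemma dX_mon (r : Rq) (a b : ℕ) : dX (mon r a b) = (b : B2) * mon r a (b - 1) := by
  cases b with
  | zero => simp [mon, dX, pderiv_mul, pderiv_pow, pderiv_X_self,
      pderiv_X_of_ne (show (0 : Fin 2) ≠ 1 by decide)]
  | succ b =>
    simp [mon, dX, pderiv_mul, pderiv_pow, pderiv_X_self,
      pderiv_X_of_ne (show (0 : Fin 2) ≠ 1 by decide), nsmul_eq_mul]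
    ring

lemma dT_mon (r : Rq) (a b : ℕ) : dT (mon r a b) = (a : B2) * mon r (a - 1) b := by
  cases a with
  | zero => simp [mon, dT, pderiv_mul, pderiv_pow, pderiv_X_self,
      pderiv_X_of_ne (show (1 : Fin 2) ≠ 0 by decide)]
  | succ a =>
    simp [mon, dT, pderiv_mul, pderiv_pow, pderiv_X_self,
      pderiv_X_of_ne (show (1 : Fin 2) ≠ 0 by decide), nsmul_eq_mul]
    ring

lemma iter_dX_mon (r : Rq) (a b j : ℕ) :
    dX^[j] (mon r a b) = (b.descFactorial j : B2) * mon r a (b - j) := by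
  induction j generalizing b with
  | zero => simp
  | succ j ih =>
    rw [Function.iterate_succ_apply, dX_mon]
    cases b with
    | zero => simp [iter_dX_natCast_mul, iter_dX_zero]
    | succ b =>
      rw [iter_dX_natCast_mul, ih, Nat.succ_descFactorial_succ]
      push_cast
      ring

lemma iter_dT_mon (r : Rq) (a b i : ℕ) :
    dT^[i] (mon r a b) = (a.descFactorial i : B2) * mon r (a - i) b := by
  induction i generalizing a with
  | zero => simp
  | succ i ih =>
    rw [Function.iterate_succ_apply, dT_mon]
    cases a with
    | zero => simp [iter_dT_natCast_mul, iter_dT_zero]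
    | succ a =>
      rw [iter_dT_natCast_mul, ih, Nat.succ_descFactorial_succ]
      push_cast
      ring

lemma constantCoeff_mon (r : Rq) (a b : ℕ) :
    constantCoeff (mon r a b) = if a = 0 ∧ b = 0 then r else 0 := by
  cases a <;> cases b <;> simp [mon, pow_succ]

lemma cc_mon (r : Rq) (a b i j : ℕ) :
    cc (mon r a b) i j = if a = i ∧ b = j then ((Nat.factorial i * Nat.factorial j : ℕ) : Rq) * r else 0 := by
  rw [cc, iter_dX_mon, iter_dT_natCast_mul, iter_dT_mon]
  simp only [map_mul, map_natCast, constantCoeff_mon]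
  by_cases h : a = i ∧ b = j
  · obtain ⟨rfl, rfl⟩ := h
    simp [Nat.descFactorial_self]
    push_cast
    ring
  · rw [if_neg h]
    rcases Decidable.not_and_iff_or_not.mp h with h1 | h2
    · rcases Nat.lt_or_ge a i with hlt | hge
      · rw [Nat.descFactorial_eq_zero_iff_lt.mpr hlt]; simp
      · have : a - i ≠ 0 := by omega
        simp [this]
    · rcases Nat.lt_or_ge b j with hlt | hge
      · rw [Nat.descFactorial_eq_zero_iff_lt.mpr hlt]; simp
      · have : b - j ≠ 0 := by omega
        simp [this]

end S18
namespace S18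
open MvPolynomial

/-- coefficient element attached to position (k, jj) -/
def rr (k jj : ℕ) : Rq := C (((Nat.factorial jj : ℝ)) * ((Nat.factorial (k - jj) : ℝ)))⁻¹ * X (k, jj)

/-- the symbolic polynomial A -/
def AS (m : ℕ) : B2 :=
  ∑ k ∈ Finset.Icc 1 m, ∑ jj ∈ Finset.range (k + 1), mon (rr k jj) jj (k - jj)

lemma cc_AS (m i j : ℕ) :
    cc (AS m) i j = if 1 ≤ i + j ∧ i + j ≤ m then X (i + j, i) else 0 := by
  rw [AS, cc_sum]
  have hstep : ∀ k ∈ Finset.Icc 1 m,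
      cc (∑ jj ∈ Finset.range (k + 1), mon (rr k jj) jj (k - jj)) i j
        = if k = i + j then ((Nat.factorial i * Nat.factorial j : ℕ) : Rq) * rr k i else 0 := by
    intro k hk
    rw [cc_sum]
    by_cases hkij : k = i + j
    · subst hkij
      rw [Finset.sum_eq_single_of_mem i (by simp)]
      · simp [cc_mon]
      · intro jj hjj hne
        rw [cc_mon, if_neg]
        rintro ⟨rfl, -⟩; exact hne rfl
    · rw [if_neg hkij]
      apply Finset.sum_eq_zero
      intro jj hjj
      rw [cc_mon, if_neg]
      rintro ⟨rfl, h2⟩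
      simp only [Finset.mem_range] at hjj
      omega
  rw [Finset.sum_congr rfl hstep, Finset.sum_ite_eq' (Finset.Icc 1 m) (i + j)]
  simp only [Finset.mem_Icc]
  by_cases hm : 1 ≤ i + j ∧ i + j ≤ m
  · rw [if_pos hm, if_pos hm, rr]
    have h1 : i + j - i = j := by omega
    rw [h1]
    have hne : ((Nat.factorial i : ℝ)) * ((Nat.factorial j : ℝ)) ≠ 0 := by
      positivity
    rw [← C_eq_coe_nat, ← mul_assoc, ← map_mul, Nat.cast_mul, mul_inv_cancel₀ hne, map_one,
      one_mul]
  · rw [if_neg hm, if_neg hm]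

end S18

namespace S18
open MvPolynomial

def Elow (m n : ℕ) : Set (ℕ × ℕ) := {p | 1 ≤ p.1 ∧ p.1 ≤ m ∧ p.2 ≤ p.1 ∧ p.1 ≤ n}

def Eset (m h i : ℕ) : Set (ℕ × ℕ) :=
  {p | 1 ≤ p.1 ∧ p.1 ≤ m ∧ p.2 ≤ p.1 ∧ p.1 ≤ h ∧ (p.1 < h ∨ p.2 ≤ i + 1)}

lemma Elow_mono (m : ℕ) {n n' : ℕ} (h : n ≤ n') : Elow m n ⊆ Elow m n' := by
  intro p hp; obtain ⟨h1, h2, h3, h4⟩ := hp; exact ⟨h1, h2, h3, le_trans h4 h⟩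

lemma Elow_subset_Eset (m h i n : ℕ) (hn : n < h) : Elow m n ⊆ Eset m h i := by
  intro p hp; obtain ⟨h1, h2, h3, h4⟩ := hp
  exact ⟨h1, h2, h3, by omega, Or.inl (by omega)⟩

lemma vars_mul_sub {x y : Rq} {S : Set (ℕ × ℕ)} (hx : ↑x.vars ⊆ S) (hy : ↑y.vars ⊆ S) :
    ↑(x * y).vars ⊆ S := by
  intro p hp
  have := vars_mul x y hp
  rcases Finset.mem_union.mp this with h | h
  · exact hx h
  · exact hy h

lemma vars_add_sub {x y : Rq} {S : Set (ℕ × ℕ)} (hx : ↑x.vars ⊆ S) (hy : ↑y.vars ⊆ S) :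
    ↑(x + y).vars ⊆ S := by
  intro p hp
  have := vars_add_subset x y hp
  rcases Finset.mem_union.mp this with h | h
  · exact hx h
  · exact hy h

lemma vars_cc_AS (m a b : ℕ) :
    ↑(cc (AS m) a b).vars ⊆
      {p : ℕ × ℕ | p.1 = a + b ∧ p.2 = a ∧ 1 ≤ a + b ∧ a + b ≤ m} := by
  rw [cc_AS]
  split_ifs with h
  · intro p hp
    rw [Finset.mem_coe, vars_X, Finset.mem_singleton] at hp
    subst hp
    exact ⟨rfl, rfl, h.1, h.2⟩
  · simp [vars_0]

lemma cc_C (r : Rq) (i j : ℕ) : cc (C r) i j = if i = 0 ∧ j = 0 then r else 0 := by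
  have h : (C r : B2) = mon r 0 0 := by simp [mon]
  rw [h, cc_mon]
  by_cases hij : i = 0 ∧ j = 0
  · obtain ⟨rfl, rfl⟩ := hij; simp [Nat.factorial]
  · rw [if_neg, if_neg hij]
    rintro ⟨h1, h2⟩; exact hij ⟨h1.symm, h2.symm⟩

lemma vars_cc_C (r : Rq) (i j : ℕ) {S : Set (ℕ × ℕ)} (hr : ↑r.vars ⊆ S) :
    ↑(cc (C r) i j).vars ⊆ S := by
  rw [cc_C]; split_ifs
  · exact hr
  · simp [vars_0]

lemma vars_cc_mul (S : Set (ℕ × ℕ)) (i j : ℕ) (P Q : B2)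
    (hP : ∀ a ≤ i, ∀ b ≤ j, ↑(cc P a b).vars ⊆ S)
    (hQ : ∀ a ≤ i, ∀ b ≤ j, ↑(cc Q a b).vars ⊆ S) :
    ↑(cc (P * Q) i j).vars ⊆ S := by
  induction i generalizing j P Q with
  | zero =>
    induction j generalizing P Q with
    | zero =>
      rw [cc_mul_zero]
      exact vars_mul_sub (hP 0 le_rfl 0 le_rfl) (hQ 0 le_rfl 0 le_rfl)
    | succ j ihj =>
      rw [cc_mul_succ_right]
      apply vars_add_sub
      · exact ihj (dX P) Q
          (fun a ha b hb => by rw [← cc_succ_right]; exact hP a ha (b+1) (by omega))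
          (fun a ha b hb => hQ a ha b (by omega))
      · exact ihj P (dX Q)
          (fun a ha b hb => hP a ha b (by omega))
          (fun a ha b hb => by rw [← cc_succ_right]; exact hQ a ha (b+1) (by omega))
  | succ i ihi =>
    rw [cc_mul_succ_left]
    apply vars_add_sub
    · exact ihi j (dT P) Q
        (fun a ha b hb => by rw [← cc_succ_left]; exact hP (a+1) (by omega) b hb)
        (fun a ha b hb => hQ a (by omega) b hb)
    · exact ihi j P (dT Q)
        (fun a ha b hb => hP a (by omega) b hb)
        (fun a ha b hb => by rw [← cc_succ_left]; exact hQ (a+1) (by omega) b hb)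

lemma cc_corner (m d1 : ℕ) (V : B2)
    (hV : ∀ a b, ↑(cc V a b).vars ⊆ Elow m (a + b + d1)) (i : ℕ) :
    ∀ (j e : ℕ) (W : B2), d1 ≤ e →
      (∀ a b, ↑(cc W a b).vars ⊆ Elow m (a + b + e + 1)) →
      ∃ G : Rq, cc (V * W) i j = cc V 0 0 * cc W i j + G ∧ ↑G.vars ⊆ Elow m (i + j + e) := by
  induction i with
  | zero =>
    intro j
    induction j with
    | zero =>
      intro e W hde hW
      exact ⟨0, by rw [cc_mul_zero]; ring, by simp [vars_0]⟩
    | succ j ihj =>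
      intro e W hde hW
      obtain ⟨G2, hG2, hG2v⟩ := ihj (e + 1) (dX W) (by omega)
        (fun a b => by rw [← cc_succ_right]
                       exact (hW a (b+1)).trans (Elow_mono m (by omega)))
      refine ⟨cc (dX V * W) 0 j + G2, ?_, ?_⟩
      · rw [cc_mul_succ_right, hG2, ← cc_succ_right]; ring
      · apply vars_add_sub
        · apply vars_cc_mul
          · intro a ha b hb
            rw [← cc_succ_right]
            exact (hV a (b+1)).trans (Elow_mono m (by omega))
          · intro a ha b hb
            exact (hW a b).trans (Elow_mono m (by omega))
        · exact hG2v.trans (Elow_mono m (by omega))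
  | succ i ihi =>
    intro j e W hde hW
    obtain ⟨G2, hG2, hG2v⟩ := ihi j (e + 1) (dT W) (by omega)
      (fun a b => by rw [← cc_succ_left]
                     exact (hW (a+1) b).trans (Elow_mono m (by omega)))
    refine ⟨cc (dT V * W) i j + G2, ?_, ?_⟩
    · rw [cc_mul_succ_left, hG2, ← cc_succ_left]; ring
    · apply vars_add_sub
      · apply vars_cc_mul
        · intro a ha b hb
          rw [← cc_succ_left]
          exact (hV (a+1) b).trans (Elow_mono m (by omega))
        · intro a ha b hb
          exact (hW a b).trans (Elow_mono m (by omega))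
      · exact hG2v.trans (Elow_mono m (by omega))

end S18

namespace S18
open MvPolynomial

def DS (m : ℕ) : B2 :=
  (dX (AS m)) ^ 2 * dT (dT (AS m)) - 2 * dT (AS m) * dX (AS m) * dT (dX (AS m)) +
    ((dT (AS m)) ^ 2 + C (C (π ^ 2)) * (dX (AS m)) ^ 4) * dX (dX (AS m))

def Gpoly (m i j : ℕ) : Rq :=
  cc (DS m) i j - X (1, 0) ^ 2 * X (i + j + 2, i + 2)

lemma cc_DS_eq (m i j : ℕ) :
    cc (DS m) i j = X (1, 0) ^ 2 * X (i + j + 2, i + 2) + Gpoly m i j := by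
  rw [Gpoly]; ring

/- convenient membership lemmas -/
lemma uset_sub_Eset_right (m h i a b o : ℕ) (hm : a + b + o ≤ h) (hh : h ≤ m)
    (hb : a + o - 1 ≤ i + 1) (ho : 1 ≤ o) :
    {p : ℕ × ℕ | p.1 = a + b + o ∧ p.2 = a + o - 1 ∧ 1 ≤ a + b + o ∧ a + b + o ≤ m}
      ⊆ Eset m h i := by
  intro p hp
  obtain ⟨h1, h2, h3, h4⟩ := hp
  exact ⟨by omega, by omega, by omega, by omega, Or.inr (by omega)⟩

lemma uset_sub_Elow (m n a b : ℕ) (hn : a + b ≤ n) :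
    {p : ℕ × ℕ | p.1 = a + b ∧ p.2 = a ∧ 1 ≤ a + b ∧ a + b ≤ m} ⊆ Elow m n := by
  intro p hp
  obtain ⟨h1, h2, h3, h4⟩ := hp
  exact ⟨by omega, by omega, by omega, by omega⟩

/-- the factors `∂_t A`, `∂_x A` have all `cc`-variables at level ≤ a+b+1 -/
lemma vars_cc_AT (m a b : ℕ) {S : Set (ℕ × ℕ)}
    (hS : {p : ℕ × ℕ | p.1 = a + 1 + b ∧ p.2 = a + 1 ∧ 1 ≤ a + 1 + b ∧ a + 1 + b ≤ m} ⊆ S) :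
    ↑(cc (dT (AS m)) a b).vars ⊆ S := by
  rw [← cc_succ_left]
  exact (vars_cc_AS m (a + 1) b).trans hS

lemma vars_cc_AX (m a b : ℕ) {S : Set (ℕ × ℕ)}
    (hS : {p : ℕ × ℕ | p.1 = a + (b + 1) ∧ p.2 = a ∧ 1 ≤ a + (b + 1) ∧ a + (b + 1) ≤ m} ⊆ S) :
    ↑(cc (dX (AS m)) a b).vars ⊆ S := by
  rw [← cc_succ_right]
  exact (vars_cc_AS m a (b + 1)).trans hS

lemma vars_Gpoly (m i j : ℕ) (hm : i + j + 2 ≤ m) :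
    ↑(Gpoly m i j).vars ⊆ Eset m (i + j + 2) i := by
  classical
  set h := i + j + 2 with hh
  -- corner decomposition for the first term
  have hV : ∀ a b, ↑(cc ((dX (AS m)) ^ 2) a b).vars ⊆ Elow m (a + b + 1) := by
    intro a b
    rw [pow_two]
    apply vars_cc_mul
    · intro a' ha' b' hb'
      exact vars_cc_AX m a' b' (uset_sub_Elow m (a + b + 1) a' (b' + 1) (by omega))
    · intro a' ha' b' hb'
      exact vars_cc_AX m a' b' (uset_sub_Elow m (a + b + 1) a' (b' + 1) (by omega))
  have hW : ∀ a b, ↑(cc (dT (dT (AS m))) a b).vars ⊆ Elow m (a + b + 1 + 1) := by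
    intro a b
    rw [← cc_succ_left, ← cc_succ_left]
    exact (vars_cc_AS m (a + 2) b).trans (uset_sub_Elow m (a + b + 2) (a + 2) b (by omega))
  obtain ⟨G1, hG1, hG1v⟩ := cc_corner m 1 ((dX (AS m)) ^ 2) hV i j 1 (dT (dT (AS m)))
    le_rfl hW
  -- the corner term is the leading monomial
  have hcorner : cc ((dX (AS m)) ^ 2) 0 0 * cc (dT (dT (AS m))) i j
      = X ((1, 0) : ℕ × ℕ) ^ 2 * X ((i + j + 2, i + 2) : ℕ × ℕ) := by
    have e1 : cc ((dX (AS m)) ^ 2) 0 0 = (X ((1, 0) : ℕ × ℕ)) ^ 2 := by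
      rw [pow_two, cc_mul_zero, ← cc_succ_right, cc_AS]
      rw [if_pos ⟨le_rfl, by omega⟩]
      ring
    have e2 : cc (dT (dT (AS m))) i j = X ((i + j + 2, i + 2) : ℕ × ℕ) := by
      rw [← cc_succ_left, ← cc_succ_left, cc_AS, if_pos ⟨by omega, by omega⟩]
      congr 2
      omega
    rw [e1, e2]
  -- second and third terms have all variables in Eset
  have hT2 : ↑(cc (2 * dT (AS m) * dX (AS m) * dT (dX (AS m))) i j).vars
      ⊆ Eset m h i := by
    apply vars_cc_mul
    · intro a ha b hb
      apply vars_cc_mul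
      · intro a' ha' b' hb'
        apply vars_cc_mul
        · intro a'' ha'' b'' hb''
          have h2 : ((2 : B2)) = C ((2 : Rq)) := (map_ofNat (C : Rq →+* B2) 2).symm
          rw [h2]
          apply vars_cc_C
          have h3 : ((2 : Rq)) = C ((2 : ℝ)) := (map_ofNat (C : ℝ →+* Rq) 2).symm
          rw [h3, vars_C]
          simp
        · intro a'' ha'' b'' hb''
          apply vars_cc_AT m a'' b''
          apply Set.Subset.trans (uset_sub_Elow m (i + j + 1) (a'' + 1) b'' (by omega))
          exact Elow_subset_Eset m h i (i + j + 1) (by omega)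
      · intro a' ha' b' hb'
        apply vars_cc_AX m a' b'
        apply Set.Subset.trans (uset_sub_Elow m (i + j + 1) a' (b' + 1) (by omega))
        exact Elow_subset_Eset m h i (i + j + 1) (by omega)
    · intro a ha b hb
      rw [← cc_succ_left, ← cc_succ_right]
      apply (vars_cc_AS m (a + 1) (b + 1)).trans
      intro p hp
      obtain ⟨h1, h2, h3, h4⟩ := hp
      exact ⟨by omega, by omega, by omega, by omega, Or.inr (by omega)⟩
  have hT3 : ↑(cc (((dT (AS m)) ^ 2 + C (C (π ^ 2)) * (dX (AS m)) ^ 4) * dX (dX (AS m))) i j).vars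
      ⊆ Eset m h i := by
    apply vars_cc_mul
    · intro a ha b hb
      rw [cc_add]
      apply vars_add_sub
      · rw [pow_two]
        have hfac : ∀ a' ≤ a, ∀ b' ≤ b, ↑(cc (dT (AS m)) a' b').vars ⊆ Eset m h i := by
          intro a' ha' b' hb'
          apply vars_cc_AT m a' b'
          apply Set.Subset.trans (uset_sub_Elow m (i + j + 1) (a' + 1) b' (by omega))
          exact Elow_subset_Eset m h i (i + j + 1) (by omega)
        exact vars_cc_mul _ a b _ _ hfac hfac
      · have hx4 : (dX (AS m)) ^ 4 = ((dX (AS m) * dX (AS m)) * dX (AS m)) * dX (AS m) := by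
          ring
        have hfacx : ∀ a' ≤ i, ∀ b' ≤ j, ↑(cc (dX (AS m)) a' b').vars ⊆ Eset m h i := by
          intro a' ha' b' hb'
          apply vars_cc_AX m a' b'
          apply Set.Subset.trans (uset_sub_Elow m (i + j + 1) a' (b' + 1) (by omega))
          exact Elow_subset_Eset m h i (i + j + 1) (by omega)
        apply vars_cc_mul
        · intro a' ha' b' hb'
          apply vars_cc_C
          rw [vars_C]
          simp
        · intro a' ha' b' hb'
          rw [hx4]
          apply vars_cc_mul
          · intro a'' ha'' b'' hb''
            apply vars_cc_mul
            · intro a3 ha3 b3 hb3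
              apply vars_cc_mul
              · exact fun a4 ha4 b4 hb4 => hfacx a4 (by omega) b4 (by omega)
              · exact fun a4 ha4 b4 hb4 => hfacx a4 (by omega) b4 (by omega)
            · exact fun a4 ha4 b4 hb4 => hfacx a4 (by omega) b4 (by omega)
          · exact fun a4 ha4 b4 hb4 => hfacx a4 (by omega) b4 (by omega)
    · intro a ha b hb
      rw [← cc_succ_right, ← cc_succ_right]
      apply (vars_cc_AS m a (b + 2)).trans
      intro p hp
      obtain ⟨h1, h2, h3, h4⟩ := hp
      exact ⟨by omega, by omega, by omega, by omega, Or.inr (by omega)⟩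
  -- assemble
  have hDS : Gpoly m i j
      = G1 - cc (2 * dT (AS m) * dX (AS m) * dT (dX (AS m))) i j
        + cc (((dT (AS m)) ^ 2 + C (C (π ^ 2)) * (dX (AS m)) ^ 4) * dX (dX (AS m))) i j := by
    rw [Gpoly, DS, cc_add, cc_sub, hG1, hcorner]
    ring
  rw [hDS]
  apply vars_add_sub
  · rw [sub_eq_add_neg]
    apply vars_add_sub
    · exact hG1v.trans (Elow_subset_Eset m h i (i + j + 1) (by omega))
    · intro p hp
      rw [Finset.mem_coe, vars_neg] at hp
      exact hT2 hp
  · exact hT3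

end S18

namespace S18
open MvPolynomial

def vq (q : ℕ → ℕ → ℝ) : ℕ × ℕ → ℝ := fun p => q p.1 p.2

def toFun (q : ℕ → ℕ → ℝ) (P : B2) : ℝ × ℝ → ℝ :=
  fun z => eval ![z.1, z.2] (map (eval (vq q)) P)

lemma hasDerivAt_eval_fst (p : MvPolynomial (Fin 2) ℝ) (x y : ℝ) :
    HasDerivAt (fun s => eval ![s, y] p) (eval ![x, y] (pderiv 0 p)) x := by
  induction p using MvPolynomial.induction_on with
  | C a => simpa using hasDerivAt_const x a
  | add p q hp hq => simp only [map_add]; exact hp.add hq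
  | mul_X p n ih =>
    fin_cases n
    · show HasDerivAt (fun s => eval ![s, y] (p * X 0)) (eval ![x, y] (pderiv 0 (p * X 0))) x
      have h := ih.mul (hasDerivAt_id x)
      simp only [pderiv_mul, eval_mul, eval_add, eval_X, Matrix.cons_val_zero,
        pderiv_X_self, id_eq, map_one, mul_one] at h ⊢
      exact h.congr_deriv (by ring)
    · show HasDerivAt (fun s => eval ![s, y] (p * X 1)) (eval ![x, y] (pderiv 0 (p * X 1))) x
      have h := ih.mul_const y
      simp only [pderiv_mul, eval_mul, eval_add, eval_X, Matrix.cons_val_one,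
        Matrix.head_cons, map_zero, mul_zero, add_zero,
        pderiv_X_of_ne (show (1 : Fin 2) ≠ 0 by decide)] at h ⊢
      exact h

lemma hasDerivAt_eval_snd (p : MvPolynomial (Fin 2) ℝ) (x y : ℝ) :
    HasDerivAt (fun s => eval ![x, s] p) (eval ![x, y] (pderiv 1 p)) y := by
  induction p using MvPolynomial.induction_on with
  | C a => simpa using hasDerivAt_const y a
  | add p q hp hq => simp only [map_add]; exact hp.add hq
  | mul_X p n ih =>
    fin_cases n
    · show HasDerivAt (fun s => eval ![x, s] (p * X 0)) (eval ![x, y] (pderiv 1 (p * X 0))) y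
      have h := ih.mul_const x
      simp only [pderiv_mul, eval_mul, eval_add, eval_X, Matrix.cons_val_zero,
        map_zero, mul_zero, add_zero,
        pderiv_X_of_ne (show (0 : Fin 2) ≠ 1 by decide)] at h ⊢
      exact h
    · show HasDerivAt (fun s => eval ![x, s] (p * X 1)) (eval ![x, y] (pderiv 1 (p * X 1))) y
      have h := ih.mul (hasDerivAt_id y)
      simp only [pderiv_mul, eval_mul, eval_add, eval_X, Matrix.cons_val_one,
        Matrix.head_cons, pderiv_X_self, id_eq, map_one, mul_one] at h ⊢
      exact h.congr_deriv (by simp)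

lemma pdT_toFun (q : ℕ → ℕ → ℝ) (P : B2) : pdT (toFun q P) = toFun q (dT P) := by
  funext z
  have h := hasDerivAt_eval_fst (map (eval (vq q)) P) z.1 z.2
  show deriv (fun s => toFun q P (s, z.2)) z.1 = _
  rw [show (fun s => toFun q P (s, z.2)) = fun s => eval ![s, z.2] (map (eval (vq q)) P)
    from rfl, h.deriv]
  show eval ![z.1, z.2] (pderiv 0 (map (eval (vq q)) P)) = _
  rw [pderiv_map]
  rfl

lemma pdX_toFun (q : ℕ → ℕ → ℝ) (P : B2) : pdX (toFun q P) = toFun q (dX P) := by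
  funext z
  have h := hasDerivAt_eval_snd (map (eval (vq q)) P) z.1 z.2
  show deriv (fun s => toFun q P (z.1, s)) z.2 = _
  rw [show (fun s => toFun q P (z.1, s)) = fun s => eval ![z.1, s] (map (eval (vq q)) P)
    from rfl, h.deriv]
  show eval ![z.1, z.2] (pderiv 1 (map (eval (vq q)) P)) = _
  rw [pderiv_map]
  rfl

lemma pdIter_toFun (q : ℕ → ℕ → ℝ) (P : B2) (i j : ℕ) :
    pdIter (toFun q P) i j = toFun q (dT^[i] (dX^[j] P)) := by
  have hx : ∀ (j : ℕ) (P : B2), pdX^[j] (toFun q P) = toFun q (dX^[j] P) := by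
    intro j
    induction j with
    | zero => intro P; simp
    | succ j ih =>
      intro P
      rw [Function.iterate_succ_apply', ih, pdX_toFun]
      exact congrArg (toFun q) (Function.iterate_succ_apply' dX j P).symm
  have ht : ∀ (i : ℕ) (P : B2), pdT^[i] (toFun q P) = toFun q (dT^[i] P) := by
    intro i
    induction i with
    | zero => intro P; simp
    | succ i ih =>
      intro P
      rw [Function.iterate_succ_apply', ih, pdT_toFun]
      exact congrArg (toFun q) (Function.iterate_succ_apply' dT i P).symm
  rw [pdIter, hx, ht]

lemma AQ_toFun (m : ℕ) (q : ℕ → ℕ → ℝ) : AQ m q = toFun q (AS m) := by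
  funext z
  rw [AQ, toFun, AS]
  rw [map_sum, map_sum]
  apply Finset.sum_congr rfl
  intro k _
  rw [map_sum, map_sum]
  apply Finset.sum_congr rfl
  intro jj _
  simp only [mon, rr, vq, map_mul, map_pow, map_C, eval_C, eval_X, map_X,
    Matrix.cons_val_zero, Matrix.cons_val_one, Matrix.head_cons]
  ring

lemma DQ_toFun (m : ℕ) (q : ℕ → ℕ → ℝ) : DQ m q = toFun q (DS m) := by
  have h1 : pdX (toFun q (AS m)) = toFun q (dX (AS m)) := pdX_toFun q _
  have h2 : pdT (toFun q (AS m)) = toFun q (dT (AS m)) := pdT_toFun q _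
  funext z
  rw [DQ, BExpr, AQ_toFun]
  simp only [pdX_toFun, pdT_toFun]
  simp only [toFun, DS, map_sub, map_add, map_mul, map_pow, map_C, eval_C, map_ofNat]
  all_goals ring

lemma pdIter_DQ (m : ℕ) (q : ℕ → ℕ → ℝ) (i j : ℕ) :
    pdIter (DQ m q) i j (0, 0) = eval (vq q) (cc (DS m) i j) := by
  rw [DQ_toFun, pdIter_toFun]
  show eval ![(0:ℝ), (0:ℝ)] (map (eval (vq q)) (dT^[i] (dX^[j] (DS m)))) = _
  have hz : (![(0:ℝ), (0:ℝ)] : Fin 2 → ℝ) = 0 := by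
    funext i; fin_cases i <;> rfl
  rw [hz, eval_zero, constantCoeff_map]
  rfl

end S18

namespace S18
open MvPolynomial

def degd (d : (ℕ × ℕ) →₀ ℕ) : ℕ := d.sum fun _ e => e

def NB (P : Rq) (M : ℝ) : ℝ := ∑ d ∈ P.support, |coeff d P| * M ^ degd d

def LB (P : Rq) (M : ℝ) : ℝ := ∑ d ∈ P.support, |coeff d P| * (degd d : ℝ) * M ^ degd d

lemma pow_abs_sub (a b M : ℝ) (e : ℕ) (hM : 1 ≤ M) (ha : |a| ≤ M) (hb : |b| ≤ M) :
    |a ^ e - b ^ e| ≤ (e : ℝ) * M ^ e * |a - b| := by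
  induction e with
  | zero => simp
  | succ e IH =>
    have hM0 : (0 : ℝ) ≤ M := le_trans zero_le_one hM
    have hb' : |b| ^ e ≤ M ^ e := pow_le_pow_left₀ (abs_nonneg b) hb e
    have habs : |a ^ (e + 1) - b ^ (e + 1)| ≤ |a| * |a ^ e - b ^ e| + |a - b| * |b| ^ e := by
      have hr : a ^ (e + 1) - b ^ (e + 1) = a * (a ^ e - b ^ e) + (a - b) * b ^ e := by ring
      rw [hr]
      refine (abs_add_le _ _).trans ?_
      rw [abs_mul, abs_mul, abs_pow]
    have h1 : |a| * |a ^ e - b ^ e| ≤ M * ((e : ℝ) * M ^ e * |a - b|) :=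
      mul_le_mul ha IH (abs_nonneg _) hM0
    have h2 : |a - b| * |b| ^ e ≤ |a - b| * M ^ e :=
      mul_le_mul_of_nonneg_left hb' (abs_nonneg _)
    have hMe : (0 : ℝ) ≤ M ^ e := pow_nonneg hM0 e
    have hMe1 : M ^ e ≤ M ^ (e + 1) := by
      calc M ^ e = 1 * M ^ e := (one_mul _).symm
      _ ≤ M * M ^ e := mul_le_mul_of_nonneg_right hM hMe
      _ = M ^ (e + 1) := by ring
    have h3 : |a - b| * M ^ e ≤ |a - b| * M ^ (e + 1) :=
      mul_le_mul_of_nonneg_left hMe1 (abs_nonneg _)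
    have h4 : M * ((e : ℝ) * M ^ e * |a - b|) = (e : ℝ) * M ^ (e + 1) * |a - b| := by ring
    push_cast
    linarith

lemma prod_pow_bound (s : Finset (ℕ × ℕ)) (e : (ℕ × ℕ) → ℕ) (f : ℕ × ℕ → ℝ) (M : ℝ)
    (hM : 1 ≤ M) (hf : ∀ p ∈ s, |f p| ≤ M) :
    |∏ p ∈ s, f p ^ e p| ≤ M ^ (∑ p ∈ s, e p) := by
  have hM0 : (0 : ℝ) ≤ M := le_trans zero_le_one hM
  rw [Finset.abs_prod, ← Finset.prod_pow_eq_pow_sum]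
  apply Finset.prod_le_prod
  · intro p _; rw [abs_pow]; positivity
  · intro p hp; rw [abs_pow]; exact pow_le_pow_left₀ (abs_nonneg _) (hf p hp) _

lemma prod_pow_sub (s : Finset (ℕ × ℕ)) (e : (ℕ × ℕ) → ℕ) (f g : ℕ × ℕ → ℝ) (M : ℝ)
    (hM : 1 ≤ M) (hf : ∀ p ∈ s, |f p| ≤ M) (hg : ∀ p ∈ s, |g p| ≤ M) :
    |∏ p ∈ s, f p ^ e p - ∏ p ∈ s, g p ^ e p|
      ≤ (∑ p ∈ s, (e p : ℝ)) * M ^ (∑ p ∈ s, e p) * ∑ p ∈ s, |f p - g p| := by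
  classical
  have hM0 : (0 : ℝ) ≤ M := le_trans zero_le_one hM
  induction s using Finset.induction with
  | empty => simp
  | insert _ _ ha IH =>
    rename_i a s
    have hfs : ∀ p ∈ s, |f p| ≤ M := fun p hp => hf p (Finset.mem_insert_of_mem hp)
    have hgs : ∀ p ∈ s, |g p| ≤ M := fun p hp => hg p (Finset.mem_insert_of_mem hp)
    have IH' := IH hfs hgs
    rw [Finset.prod_insert ha, Finset.prod_insert ha, Finset.sum_insert ha,
      Finset.sum_insert ha, Finset.sum_insert ha]
    set A := ∏ p ∈ s, f p ^ e p
    set Bb := ∏ p ∈ s, g p ^ e p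
    have hfa : |f a| ≤ M := hf a (Finset.mem_insert_self a s)
    have hga : |g a| ≤ M := hg a (Finset.mem_insert_self a s)
    have step : |f a ^ e a * A - g a ^ e a * Bb|
        ≤ |f a ^ e a| * |A - Bb| + |f a ^ e a - g a ^ e a| * |Bb| := by
      have hr : f a ^ e a * A - g a ^ e a * Bb
          = f a ^ e a * (A - Bb) + (f a ^ e a - g a ^ e a) * Bb := by ring
      rw [hr]
      refine (abs_add_le _ _).trans ?_
      rw [abs_mul, abs_mul]
    have hfae : |f a ^ e a| ≤ M ^ e a := by rw [abs_pow]; exact pow_le_pow_left₀ (abs_nonneg _) hfa _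
    have hBb : |Bb| ≤ M ^ (∑ p ∈ s, e p) := prod_pow_bound s e g M hM hgs
    have hfg : |f a ^ e a - g a ^ e a| ≤ (e a : ℝ) * M ^ e a * |f a - g a| :=
      pow_abs_sub _ _ _ _ hM hfa hga
    -- abbreviations
    set E1 : ℝ := (e a : ℝ)
    set Es : ℝ := ∑ p ∈ s, (e p : ℝ)
    set Ma : ℝ := M ^ e a
    set Ms : ℝ := M ^ (∑ p ∈ s, e p)
    set D1 : ℝ := |f a - g a|
    set Ds : ℝ := ∑ p ∈ s, |f p - g p|
    have hE1 : 0 ≤ E1 := Nat.cast_nonneg _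
    have hEs : 0 ≤ Es := Finset.sum_nonneg fun _ _ => Nat.cast_nonneg _
    have hMa : 0 ≤ Ma := pow_nonneg hM0 _
    have hMs : 0 ≤ Ms := pow_nonneg hM0 _
    have hD1 : 0 ≤ D1 := abs_nonneg _
    have hDs : 0 ≤ Ds := Finset.sum_nonneg fun _ _ => abs_nonneg _
    have hAB : |A - Bb| ≤ Es * Ms * Ds := IH'
    have hpow : M ^ (e a + ∑ p ∈ s, e p) = Ma * Ms := pow_add M _ _
    rw [hpow]
    have main : |f a ^ e a * A - g a ^ e a * Bb|
        ≤ Ma * (Es * Ms * Ds) + E1 * Ma * D1 * Ms := by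
      refine step.trans ?_
      have t1 : |f a ^ e a| * |A - Bb| ≤ Ma * (Es * Ms * Ds) :=
        mul_le_mul hfae hAB (abs_nonneg _) hMa
      have t2 : |f a ^ e a - g a ^ e a| * |Bb| ≤ (E1 * Ma * D1) * Ms :=
        mul_le_mul hfg hBb (abs_nonneg _) (by positivity)
      linarith
    refine main.trans ?_
    nlinarith [mul_nonneg (mul_nonneg (mul_nonneg hE1 hMa) hMs) hDs,
      mul_nonneg (mul_nonneg (mul_nonneg hEs hMa) hMs) hD1]

lemma support_subset_vars (P : Rq) (d : (ℕ × ℕ) →₀ ℕ) (hd : d ∈ P.support) :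
    d.support ⊆ P.vars := fun p hp => (mem_vars p).mpr ⟨d, hd, hp⟩

lemma eval_abs_bound (P : Rq) (f : ℕ × ℕ → ℝ) (M : ℝ) (hM : 1 ≤ M)
    (hf : ∀ p ∈ (P.vars : Set (ℕ × ℕ)), |f p| ≤ M) :
    |eval f P| ≤ NB P M := by
  rw [eval_eq]
  unfold NB
  refine (Finset.abs_sum_le_sum_abs _ _).trans ?_
  apply Finset.sum_le_sum
  intro d hd
  rw [abs_mul]
  have h1 : |∏ p ∈ d.support, f p ^ d p| ≤ M ^ (∑ p ∈ d.support, d p) :=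
    prod_pow_bound _ _ _ _ hM fun p hp => hf p (support_subset_vars P d hd hp)
  have h2 : (∑ p ∈ d.support, d p) = degd d := by
    rw [degd, Finsupp.sum]
  rw [h2] at h1
  exact mul_le_mul_of_nonneg_left h1 (abs_nonneg _)

lemma eval_sub_bound (P : Rq) (f g : ℕ × ℕ → ℝ) (M : ℝ) (hM : 1 ≤ M)
    (hf : ∀ p ∈ (P.vars : Set (ℕ × ℕ)), |f p| ≤ M)
    (hg : ∀ p ∈ (P.vars : Set (ℕ × ℕ)), |g p| ≤ M) :
    |eval f P - eval g P| ≤ LB P M * ∑ p ∈ P.vars, |f p - g p| := by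
  rw [eval_eq, eval_eq, ← Finset.sum_sub_distrib]
  refine (Finset.abs_sum_le_sum_abs _ _).trans ?_
  unfold LB
  rw [Finset.sum_mul]
  apply Finset.sum_le_sum
  intro d hd
  have hsub := support_subset_vars P d hd
  have hDnn : ∀ p ∈ P.vars, (0:ℝ) ≤ |f p - g p| := fun p _ => abs_nonneg _
  have h2 : (∑ p ∈ d.support, d p) = degd d := by rw [degd, Finsupp.sum]
  have key : |∏ p ∈ d.support, f p ^ d p - ∏ p ∈ d.support, g p ^ d p|
      ≤ (degd d : ℝ) * M ^ degd d * ∑ p ∈ P.vars, |f p - g p| := by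
    refine (prod_pow_sub d.support d f g M hM
      (fun p hp => hf p (hsub hp)) (fun p hp => hg p (hsub hp))).trans ?_
    have hs1 : (∑ p ∈ d.support, (d p : ℝ)) = (degd d : ℝ) := by
      rw [← h2]; push_cast; rfl
    rw [hs1, h2]
    have hsum : (∑ p ∈ d.support, |f p - g p|) ≤ ∑ p ∈ P.vars, |f p - g p| :=
      Finset.sum_le_sum_of_subset_of_nonneg hsub fun p hp _ => abs_nonneg _
    have : (0:ℝ) ≤ (degd d : ℝ) * M ^ degd d := by positivity
    exact mul_le_mul_of_nonneg_left hsum this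
  calc |coeff d P * ∏ p ∈ d.support, f p ^ d p - coeff d P * ∏ p ∈ d.support, g p ^ d p|
      = |coeff d P| * |∏ p ∈ d.support, f p ^ d p - ∏ p ∈ d.support, g p ^ d p| := by
        rw [← abs_mul]; congr 1; ring
    _ ≤ |coeff d P| * ((degd d : ℝ) * M ^ degd d * ∑ p ∈ P.vars, |f p - g p|) :=
        mul_le_mul_of_nonneg_left key (abs_nonneg _)
    _ = |coeff d P| * (degd d : ℝ) * M ^ degd d * ∑ p ∈ P.vars, |f p - g p| := by ring

lemma NB_nonneg (P : Rq) (M : ℝ) (hM : 0 ≤ M) : 0 ≤ NB P M := by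
  unfold NB; apply Finset.sum_nonneg; intro d _; positivity

lemma LB_nonneg (P : Rq) (M : ℝ) (hM : 0 ≤ M) : 0 ≤ LB P M := by
  unfold LB; apply Finset.sum_nonneg; intro d _; positivity

end S18

namespace S18
open MvPolynomial

lemma key_id (m : ℕ) (q : ℕ → ℕ → ℝ) (i j : ℕ) :
    pdIter (DQ m q) i j (0, 0)
      = (q 1 0) ^ 2 * q (i + j + 2) (i + 2) + eval (vq q) (Gpoly m i j) := by
  rw [pdIter_DQ, cc_DS_eq, map_add, map_mul, map_pow, eval_X, eval_X]
  rfl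

def Ssum (m K : ℕ) (q' : ℕ → ℕ → ℝ) : ℝ :=
  ∑ h ∈ Finset.Icc 2 K, ∑ i ∈ Finset.range (h - 1), |pdIter (DQ m q') i (h - i - 2) (0, 0)|

lemma Ssum_nonneg (m K : ℕ) (q' : ℕ → ℕ → ℝ) : 0 ≤ Ssum m K q' := by
  unfold Ssum
  apply Finset.sum_nonneg
  intro h _
  apply Finset.sum_nonneg
  intro i _
  exact abs_nonneg _

lemma Ssum_mono (m : ℕ) {K K' : ℕ} (h : K ≤ K') (q' : ℕ → ℕ → ℝ) :
    Ssum m K q' ≤ Ssum m K' q' := by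
  unfold Ssum
  apply Finset.sum_le_sum_of_subset_of_nonneg (Finset.Icc_subset_Icc_right h)
  intro h' _ _
  apply Finset.sum_nonneg
  intro i _
  exact abs_nonneg _

lemma single_le_Ssum (m K : ℕ) (q' : ℕ → ℕ → ℝ) (i0 h0 : ℕ)
    (h2 : 2 ≤ h0) (hK : h0 ≤ K) (hi : i0 < h0 - 1) :
    |pdIter (DQ m q') i0 (h0 - i0 - 2) (0, 0)| ≤ Ssum m K q' := by
  unfold Ssum
  have hin : h0 ∈ Finset.Icc 2 K := Finset.mem_Icc.mpr ⟨h2, hK⟩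
  calc |pdIter (DQ m q') i0 (h0 - i0 - 2) (0, 0)|
      ≤ ∑ i ∈ Finset.range (h0 - 1), |pdIter (DQ m q') i (h0 - i - 2) (0, 0)| :=
        Finset.single_le_sum (f := fun i => |pdIter (DQ m q') i (h0 - i - 2) (0, 0)|)
          (fun _ _ => abs_nonneg _) (Finset.mem_range.mpr hi)
    _ ≤ _ := Finset.single_le_sum
        (f := fun h => ∑ i ∈ Finset.range (h - 1), |pdIter (DQ m q') i (h - i - 2) (0, 0)|)
        (fun _ _ => Finset.sum_nonneg fun _ _ => abs_nonneg _) hin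

lemma arr_bound (m : ℕ) (ε B : ℝ) (hε : 0 < ε) (hB : 0 ≤ B) :
    ∃ M : ℝ, 1 ≤ M ∧ ∀ q0 q1 : ℕ → ℝ, ∀ q : ℕ → ℕ → ℝ,
      q0 1 ≤ -ε → (∀ k, 1 ≤ k → k ≤ m → |q0 k| + |q1 k| ≤ B) →
      IsConsistentExtension m q0 q1 q →
      ∀ k j, 1 ≤ k → k ≤ m → j ≤ k → |q k j| ≤ M := by
  suffices H : ∀ K, K ≤ m → ∀ J : ℕ, ∃ M : ℝ, 1 ≤ M ∧
      ∀ q0 q1 : ℕ → ℝ, ∀ q : ℕ → ℕ → ℝ,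
      q0 1 ≤ -ε → (∀ k, 1 ≤ k → k ≤ m → |q0 k| + |q1 k| ≤ B) →
      IsConsistentExtension m q0 q1 q →
      ∀ k j, 1 ≤ k → k ≤ K → j ≤ k → (k < K ∨ j ≤ J) → |q k j| ≤ M by
    obtain ⟨M, hM1, hM⟩ := H m le_rfl m
    exact ⟨M, hM1, fun q0 q1 q h1 h2 h3 k j hk hkm hj =>
      hM q0 q1 q h1 h2 h3 k j hk hkm hj (Or.inr (le_trans hj hkm))⟩
  intro K
  induction K with
  | zero => exact fun _ J => ⟨1, le_rfl, fun _ _ _ _ _ _ k j hk hK _ _ => absurd hK (by omega)⟩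
  | succ K ihK =>
    intro hKm J
    obtain ⟨M0, hM01, hM0⟩ := ihK (by omega) K
    induction J with
    | zero =>
      refine ⟨max M0 B, le_trans hM01 (le_max_left _ _), ?_⟩
      intro q0 q1 q h1 h2 h3 k j hk hK hj hcond
      by_cases hkK : k ≤ K
      · exact le_trans (hM0 q0 q1 q h1 h2 h3 k j hk hkK hj (Or.inr (by omega)))
          (le_max_left _ _)
      · have hk1 : k = K + 1 := by omega
        have hj' : j = 0 := by omega
        subst hk1; subst hj'
        rw [(h3.2 (K + 1) (by omega) (by omega)).1]
        have h2' := h2 (K + 1) (by omega) (by omega)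
        have hb : |q0 (K + 1)| ≤ B := by linarith [abs_nonneg (q1 (K + 1))]
        exact le_trans hb (le_max_right _ _)
    | succ J ihJ =>
      obtain ⟨MJ, hMJ1, hMJ⟩ := ihJ
      by_cases hc : 2 ≤ J + 1 ∧ J + 1 ≤ K + 1
      · refine ⟨max MJ ((ε ^ 2)⁻¹ * NB (Gpoly m (J - 1) (K - J)) MJ),
          le_trans hMJ1 (le_max_left _ _), ?_⟩
        intro q0 q1 q h1 h2 h3 k j hk hK hj hcond
        by_cases hnew : k = K + 1 ∧ j = J + 1
        · obtain ⟨rfl, rfl⟩ := hnew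
          have hvars : ∀ p ∈ ((Gpoly m (J - 1) (K - J)).vars : Set (ℕ × ℕ)),
              |vq q p| ≤ MJ := by
            intro p hp
            have hpE := vars_Gpoly m (J - 1) (K - J) (by omega) hp
            obtain ⟨e1, e2, e3, e4, e5⟩ := hpE
            apply hMJ q0 q1 q h1 h2 h3 p.1 p.2 e1 (by omega) e3
            rcases e5 with h5 | h5
            · exact Or.inl (by omega)
            · exact Or.inr (by omega)
          have hcons := h3.1.2 (J - 1) (K - J) (by omega)
          have hkey := key_id m q (J - 1) (K - J)
          rw [hcons] at hkey
          have e1 : J - 1 + (K - J) + 2 = K + 1 := by omega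
          have e2 : J - 1 + 2 = J + 1 := by omega
          rw [e1, e2] at hkey
          have hq10 : q 1 0 = q0 1 := (h3.2 1 le_rfl (by omega)).1
          have hq10e : ε ≤ |q 1 0| := by
            rw [hq10, abs_of_nonpos (by linarith)]; linarith
          have hsq : ε ^ 2 ≤ (q 1 0) ^ 2 := by
            nlinarith [abs_nonneg (q 1 0), sq_abs (q 1 0)]
          have hev : |eval (vq q) (Gpoly m (J - 1) (K - J))| ≤ NB (Gpoly m (J - 1) (K - J)) MJ :=
            eval_abs_bound _ _ _ hMJ1 hvars
          have hzero : (q 1 0) ^ 2 * q (K + 1) (J + 1)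
              = - eval (vq q) (Gpoly m (J - 1) (K - J)) := by linarith [hkey]
          have hprod : (q 1 0) ^ 2 * |q (K + 1) (J + 1)| ≤ NB (Gpoly m (J - 1) (K - J)) MJ := by
            calc (q 1 0) ^ 2 * |q (K + 1) (J + 1)|
                = |(q 1 0) ^ 2 * q (K + 1) (J + 1)| := by
                  rw [abs_mul, abs_of_nonneg (sq_nonneg (q 1 0))]
              _ = |eval (vq q) (Gpoly m (J - 1) (K - J))| := by rw [hzero, abs_neg]
              _ ≤ _ := hev
          have hε2 : (0:ℝ) < ε ^ 2 := by positivity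
          have h' : ε ^ 2 * |q (K + 1) (J + 1)| ≤ NB (Gpoly m (J - 1) (K - J)) MJ := by
            nlinarith [abs_nonneg (q (K + 1) (J + 1))]
          have hfin : |q (K + 1) (J + 1)| ≤ (ε ^ 2)⁻¹ * NB (Gpoly m (J - 1) (K - J)) MJ := by
            calc |q (K + 1) (J + 1)| = (ε ^ 2)⁻¹ * (ε ^ 2 * |q (K + 1) (J + 1)|) := by
                  field_simp
              _ ≤ (ε ^ 2)⁻¹ * NB (Gpoly m (J - 1) (K - J)) MJ :=
                  mul_le_mul_of_nonneg_left h' (by positivity)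
          exact le_trans hfin (le_max_right _ _)
        · have hsplit : k ≤ K ∨ (k = K + 1 ∧ j ≤ J) := by omega
          rcases hsplit with hkK | ⟨rfl, hjJ⟩
          · exact le_trans (hMJ q0 q1 q h1 h2 h3 k j hk (by omega) hj (Or.inl (by omega)))
              (le_max_left _ _)
          · exact le_trans (hMJ q0 q1 q h1 h2 h3 (K + 1) j hk hK hj (Or.inr hjJ))
              (le_max_left _ _)
      · refine ⟨max MJ B, le_trans hMJ1 (le_max_left _ _), ?_⟩
        intro q0 q1 q h1 h2 h3 k j hk hK hj hcond
        by_cases hkK : k < K + 1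
        · exact le_trans (hMJ q0 q1 q h1 h2 h3 k j hk (by omega) hj (Or.inl hkK))
            (le_max_left _ _)
        · have hk1 : k = K + 1 := by omega
          subst hk1
          have hJc : J = 0 ∨ K + 1 < J + 1 := by omega
          rcases hJc with rfl | hbig
          · have hj1 : j ≤ 1 := by omega
            interval_cases j
            · rw [(h3.2 (K + 1) (by omega) (by omega)).1]
              have h2' := h2 (K + 1) (by omega) (by omega)
              have hb : |q0 (K + 1)| ≤ B := by linarith [abs_nonneg (q1 (K + 1))]
              exact le_trans hb (le_max_right _ _)
            · rw [(h3.2 (K + 1) (by omega) (by omega)).2]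
              have h2' := h2 (K + 1) (by omega) (by omega)
              have hb : |q1 (K + 1)| ≤ B := by linarith [abs_nonneg (q0 (K + 1))]
              exact le_trans hb (le_max_right _ _)
          · exact le_trans (hMJ q0 q1 q h1 h2 h3 (K + 1) j hk hK hj (Or.inr (by omega)))
              (le_max_left _ _)

end S18

namespace S18
open MvPolynomial

lemma diff_bound (m : ℕ) (ε M : ℝ) (hε : 0 < ε) (hM : 1 ≤ M) :
    ∀ K, K ≤ m → ∀ J : ℕ, ∃ C : ℝ, 0 ≤ C ∧
      ∀ q0 q1 : ℕ → ℝ, ∀ q q' : ℕ → ℕ → ℝ,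
      q0 1 ≤ -ε →
      IsConsistentExtension m q0 q1 q →
      (∀ k, 1 ≤ k → k ≤ m → q' k 0 = q0 k ∧ q' k 1 = q1 k) →
      (∀ k j, 1 ≤ k → k ≤ m → j ≤ k → |q k j| ≤ M) →
      (∀ k j, 1 ≤ k → k ≤ m → j ≤ k → |q' k j| ≤ M) →
      ∀ k j, 1 ≤ k → k ≤ K → j ≤ k → (k < K ∨ j ≤ J) →
        |q k j - q' k j| ≤ C * Ssum m K q' := by
  intro K
  induction K with
  | zero => exact fun _ J => ⟨0, le_rfl,
      fun _ _ _ _ _ _ _ _ _ k j hk hK _ _ => absurd hK (by omega)⟩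
  | succ K ihK =>
    intro hKm J
    obtain ⟨C0, hC00, hC0⟩ := ihK (by omega) K
    -- helper: C0-covered entries, with respect to Ssum m (K+1)
    have hC0' : ∀ q0 q1 : ℕ → ℝ, ∀ q q' : ℕ → ℕ → ℝ,
        q0 1 ≤ -ε → IsConsistentExtension m q0 q1 q →
        (∀ k, 1 ≤ k → k ≤ m → q' k 0 = q0 k ∧ q' k 1 = q1 k) →
        (∀ k j, 1 ≤ k → k ≤ m → j ≤ k → |q k j| ≤ M) →
        (∀ k j, 1 ≤ k → k ≤ m → j ≤ k → |q' k j| ≤ M) →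
        ∀ k j, 1 ≤ k → k ≤ K → j ≤ k → |q k j - q' k j| ≤ C0 * Ssum m (K + 1) q' := by
      intro q0 q1 q q' h1 h3 h4 h5 h6 k j hk hK hj
      refine le_trans (hC0 q0 q1 q q' h1 h3 h4 h5 h6 k j hk hK hj (Or.inr (by omega))) ?_
      exact mul_le_mul_of_nonneg_left (Ssum_mono m (by omega) q') hC00
    induction J with
    | zero =>
      refine ⟨C0, hC00, ?_⟩
      intro q0 q1 q q' h1 h3 h4 h5 h6 k j hk hK hj hcond
      by_cases hkK : k ≤ K
      · exact hC0' q0 q1 q q' h1 h3 h4 h5 h6 k j hk hkK hj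
      · have hk1 : k = K + 1 := by omega
        have hj0 : j = 0 := by omega
        subst hk1; subst hj0
        rw [(h3.2 (K + 1) (by omega) (by omega)).1, (h4 (K + 1) (by omega) (by omega)).1]
        simp only [sub_self, abs_zero]
        exact mul_nonneg hC00 (Ssum_nonneg m (K + 1) q')
    | succ J ihJ =>
      obtain ⟨CJ, hCJ0, hCJ⟩ := ihJ
      by_cases hc : 2 ≤ J + 1 ∧ J + 1 ≤ K + 1
      · set Gp := Gpoly m (J - 1) (K - J) with hGp
        set Cm := max C0 CJ with hCm
        have hCm0 : 0 ≤ Cm := le_trans hC00 (le_max_left _ _)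
        set Cnew := max Cm ((ε ^ 2)⁻¹ *
          (1 + LB Gp M * (Gp.vars.card : ℝ) * Cm)) with hCnew
        have hCnew0 : 0 ≤ Cnew := le_trans hCm0 (le_max_left _ _)
        refine ⟨Cnew, hCnew0, ?_⟩
        intro q0 q1 q q' h1 h3 h4 h5 h6 k j hk hK hj hcond
        have hS0 : 0 ≤ Ssum m (K + 1) q' := Ssum_nonneg m (K + 1) q'
        by_cases hnew : k = K + 1 ∧ j = J + 1
        · obtain ⟨rfl, rfl⟩ := hnew
          -- identities
          have hkey' := key_id m q' (J - 1) (K - J)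
          have hcons := h3.1.2 (J - 1) (K - J) (by omega)
          have hkey := key_id m q (J - 1) (K - J)
          rw [hcons] at hkey
          have e1 : J - 1 + (K - J) + 2 = K + 1 := by omega
          have e2 : J - 1 + 2 = J + 1 := by omega
          rw [e1, e2] at hkey hkey'
          have hq10 : q 1 0 = q0 1 := (h3.2 1 le_rfl (by omega)).1
          have hq'10 : q' 1 0 = q0 1 := (h4 1 le_rfl (by omega)).1
          have hsq : ε ^ 2 ≤ (q0 1) ^ 2 := by nlinarith
          -- the difference equation
          have hdiff : (q0 1) ^ 2 * (q (K + 1) (J + 1) - q' (K + 1) (J + 1))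
              = - pdIter (DQ m q') (J - 1) (K - J) (0, 0)
                + (eval (vq q') Gp - eval (vq q) Gp) := by
            rw [hq10] at hkey
            rw [hq'10] at hkey'
            rw [hGp]
            linarith [hkey, hkey']
          -- bound the pdIter term
          have hpd : |pdIter (DQ m q') (J - 1) (K - J) (0, 0)| ≤ Ssum m (K + 1) q' := by
            have := single_le_Ssum m (K + 1) q' (J - 1) (K + 1) (by omega) le_rfl (by omega)
            have e3 : K + 1 - (J - 1) - 2 = K - J := by omega
            rwa [e3] at this
          -- bound the eval difference
          have hvq : ∀ p ∈ (Gp.vars : Set (ℕ × ℕ)), |vq q p| ≤ M := by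
            intro p hp
            have hpE := vars_Gpoly m (J - 1) (K - J) (by omega) hp
            obtain ⟨f1, f2, f3, f4, f5⟩ := hpE
            exact h5 p.1 p.2 f1 f2 f3
          have hvq' : ∀ p ∈ (Gp.vars : Set (ℕ × ℕ)), |vq q' p| ≤ M := by
            intro p hp
            have hpE := vars_Gpoly m (J - 1) (K - J) (by omega) hp
            obtain ⟨f1, f2, f3, f4, f5⟩ := hpE
            exact h6 p.1 p.2 f1 f2 f3
          have heval : |eval (vq q') Gp - eval (vq q) Gp|
              ≤ LB Gp M * ∑ p ∈ Gp.vars, |vq q' p - vq q p| :=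
            eval_sub_bound Gp (vq q') (vq q) M hM hvq' hvq
          -- bound each variable difference
          have hterm : ∀ p ∈ Gp.vars, |vq q' p - vq q p| ≤ Cm * Ssum m (K + 1) q' := by
            intro p hp
            have hpE := vars_Gpoly m (J - 1) (K - J) (by omega) hp
            obtain ⟨f1, f2, f3, f4, f5⟩ := hpE
            have habs : |vq q' p - vq q p| = |q p.1 p.2 - q' p.1 p.2| := by
              rw [abs_sub_comm]; rfl
            rw [habs]
            by_cases hp1 : p.1 ≤ K
            · refine le_trans (hC0' q0 q1 q q' h1 h3 h4 h5 h6 p.1 p.2 f1 hp1 f3) ?_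
              exact mul_le_mul_of_nonneg_right (le_max_left _ _) hS0
            · have hp2 : p.1 = K + 1 := by omega
              have hj2 : p.2 ≤ J := by
                rcases f5 with f5 | f5
                · omega
                · omega
              refine le_trans (hCJ q0 q1 q q' h1 h3 h4 h5 h6 p.1 p.2 f1 (by omega) f3
                (Or.inr hj2)) ?_
              exact mul_le_mul_of_nonneg_right (le_max_right _ _) hS0
          have hsum : ∑ p ∈ Gp.vars, |vq q' p - vq q p|
              ≤ (Gp.vars.card : ℝ) * (Cm * Ssum m (K + 1) q') := by
            refine le_trans (Finset.sum_le_sum hterm) ?_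
            rw [Finset.sum_const, nsmul_eq_mul]
          have hLB0 : 0 ≤ LB Gp M := LB_nonneg Gp M (by linarith)
          -- combine
          have hcomb : ε ^ 2 * |q (K + 1) (J + 1) - q' (K + 1) (J + 1)|
              ≤ (1 + LB Gp M * (Gp.vars.card : ℝ) * Cm) * Ssum m (K + 1) q' := by
            have habs2 : (q0 1) ^ 2 * |q (K + 1) (J + 1) - q' (K + 1) (J + 1)|
                ≤ |pdIter (DQ m q') (J - 1) (K - J) (0, 0)|
                  + |eval (vq q') Gp - eval (vq q) Gp| := by
              have h0 : (q0 1) ^ 2 * |q (K + 1) (J + 1) - q' (K + 1) (J + 1)|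
                  = |(q0 1) ^ 2 * (q (K + 1) (J + 1) - q' (K + 1) (J + 1))| := by
                rw [abs_mul, abs_of_nonneg (sq_nonneg (q0 1))]
              rw [h0, hdiff]
              exact (abs_add_le _ _).trans (by rw [abs_neg])
            have hev2 : |eval (vq q') Gp - eval (vq q) Gp|
                ≤ LB Gp M * ((Gp.vars.card : ℝ) * (Cm * Ssum m (K + 1) q')) :=
              le_trans heval (mul_le_mul_of_nonneg_left hsum hLB0)
            have hmono : ε ^ 2 * |q (K + 1) (J + 1) - q' (K + 1) (J + 1)|
                ≤ (q0 1) ^ 2 * |q (K + 1) (J + 1) - q' (K + 1) (J + 1)| :=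
              mul_le_mul_of_nonneg_right hsq (abs_nonneg _)
            calc ε ^ 2 * |q (K + 1) (J + 1) - q' (K + 1) (J + 1)|
                ≤ |pdIter (DQ m q') (J - 1) (K - J) (0, 0)|
                  + |eval (vq q') Gp - eval (vq q) Gp| := le_trans hmono habs2
              _ ≤ Ssum m (K + 1) q'
                  + LB Gp M * ((Gp.vars.card : ℝ) * (Cm * Ssum m (K + 1) q')) :=
                  add_le_add hpd hev2
              _ = (1 + LB Gp M * (Gp.vars.card : ℝ) * Cm) * Ssum m (K + 1) q' := by ring
          have hε2 : (0:ℝ) < ε ^ 2 := by positivity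
          have hfin : |q (K + 1) (J + 1) - q' (K + 1) (J + 1)|
              ≤ (ε ^ 2)⁻¹ * (1 + LB Gp M * (Gp.vars.card : ℝ) * Cm) * Ssum m (K + 1) q' := by
            rw [mul_assoc]
            calc |q (K + 1) (J + 1) - q' (K + 1) (J + 1)|
                = (ε ^ 2)⁻¹ * (ε ^ 2 * |q (K + 1) (J + 1) - q' (K + 1) (J + 1)|) := by
                  field_simp
              _ ≤ (ε ^ 2)⁻¹ * ((1 + LB Gp M * (Gp.vars.card : ℝ) * Cm) * Ssum m (K + 1) q') :=
                  mul_le_mul_of_nonneg_left hcomb (by positivity)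
          refine le_trans hfin ?_
          exact mul_le_mul_of_nonneg_right (le_max_right _ _) hS0
        · have hsplit : k ≤ K ∨ (k = K + 1 ∧ j ≤ J) := by omega
          rcases hsplit with hkK | ⟨rfl, hjJ⟩
          · refine le_trans (hC0' q0 q1 q q' h1 h3 h4 h5 h6 k j hk hkK hj) ?_
            have hCC : C0 ≤ Cnew := le_trans (le_max_left C0 CJ) (le_max_left _ _)
            exact mul_le_mul_of_nonneg_right hCC hS0
          · refine le_trans (hCJ q0 q1 q q' h1 h3 h4 h5 h6 (K + 1) j hk hK hj (Or.inr hjJ)) ?_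
            have hCC : CJ ≤ Cnew := le_trans (le_max_right C0 CJ) (le_max_left _ _)
            exact mul_le_mul_of_nonneg_right hCC hS0
      · refine ⟨max CJ C0, le_trans hCJ0 (le_max_left _ _), ?_⟩
        intro q0 q1 q q' h1 h3 h4 h5 h6 k j hk hK hj hcond
        have hS0 : 0 ≤ Ssum m (K + 1) q' := Ssum_nonneg m (K + 1) q'
        by_cases hkK : k < K + 1
        · refine le_trans (hCJ q0 q1 q q' h1 h3 h4 h5 h6 k j hk (by omega) hj (Or.inl hkK)) ?_
          exact mul_le_mul_of_nonneg_right (le_max_left _ _) hS0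
        · have hk1 : k = K + 1 := by omega
          subst hk1
          have hJc : J = 0 ∨ K + 1 < J + 1 := by omega
          rcases hJc with rfl | hbig
          · have hj1 : j ≤ 1 := by omega
            interval_cases j
            · rw [(h3.2 (K + 1) (by omega) (by omega)).1, (h4 (K + 1) (by omega) (by omega)).1]
              simp only [sub_self, abs_zero]
              exact mul_nonneg (le_trans hCJ0 (le_max_left _ _)) hS0
            · rw [(h3.2 (K + 1) (by omega) (by omega)).2, (h4 (K + 1) (by omega) (by omega)).2]
              simp only [sub_self, abs_zero]
              exact mul_nonneg (le_trans hCJ0 (le_max_left _ _)) hS0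
          · refine le_trans (hCJ q0 q1 q q' h1 h3 h4 h5 h6 (K + 1) j hk hK hj
              (Or.inr (by omega))) ?_
            exact mul_le_mul_of_nonneg_right (le_max_left _ _) hS0

end S18

namespace S18

lemma sqrt_sum_sq_le (s : Finset ℕ) (f : ℕ → ℝ) :
    Real.sqrt (∑ j ∈ s, f j ^ 2) ≤ ∑ j ∈ s, |f j| := by
  classical
  have h1 : ∑ j ∈ s, f j ^ 2 ≤ (∑ j ∈ s, |f j|) ^ 2 := by
    induction s using Finset.induction with
    | empty => simp
    | insert _ _ ha IH =>
      rename_i a s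
      rw [Finset.sum_insert ha, Finset.sum_insert ha]
      have hs : 0 ≤ ∑ j ∈ s, |f j| := Finset.sum_nonneg fun _ _ => abs_nonneg _
      nlinarith [sq_abs (f a), abs_nonneg (f a)]
  refine le_trans (Real.sqrt_le_sqrt h1) ?_
  rw [Real.sqrt_sq (Finset.sum_nonneg fun _ _ => abs_nonneg _)]

end S18


theorem statement18 (m : ℕ) (hm : 1 ≤ m) (ε B : ℝ) (hε : ε ∈ Ioo (0 : ℝ) 1) (hB : 1 < B) :
    ∃ C : ℝ, 1 < C ∧
      ∀ (q0 q1 : ℕ → ℝ) (q q' : ℕ → ℕ → ℝ),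
        q0 1 ≤ -ε → (∀ k, 1 ≤ k → k ≤ m → |q0 k| + |q1 k| ≤ B) →
        IsConsistentExtension m q0 q1 q →
        (∀ k, 1 ≤ k → k ≤ m → q' k 0 = q0 k ∧ q' k 1 = q1 k) →
        (∀ k, 1 ≤ k → k ≤ m → ∀ j ≤ k, |q' k j| ≤ B) →
        ∀ k, 1 ≤ k → k ≤ m →
          Real.sqrt (∑ j ∈ Finset.range (k + 1), (q k j - q' k j) ^ 2) ≤
            C * ∑ h ∈ Finset.Icc 2 k, ∑ i ∈ Finset.range (h - 1),
              |pdIter (DQ m q') i (h - i - 2) (0, 0)| := by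
  classical
  have hε0 : 0 < ε := hε.1
  obtain ⟨M1, hM11, hM1⟩ := S18.arr_bound m ε B hε0 (by linarith)
  set M := max M1 B with hMdef
  have hM1' : 1 ≤ M := le_trans hM11 (le_max_left _ _)
  have hex : ∀ K : ℕ, ∃ C : ℝ, 0 ≤ C ∧ (K ≤ m →
      ∀ q0 q1 : ℕ → ℝ, ∀ q q' : ℕ → ℕ → ℝ,
      q0 1 ≤ -ε →
      IsConsistentExtension m q0 q1 q →
      (∀ k, 1 ≤ k → k ≤ m → q' k 0 = q0 k ∧ q' k 1 = q1 k) →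
      (∀ k j, 1 ≤ k → k ≤ m → j ≤ k → |q k j| ≤ M) →
      (∀ k j, 1 ≤ k → k ≤ m → j ≤ k → |q' k j| ≤ M) →
      ∀ k j, 1 ≤ k → k ≤ K → j ≤ k → (k < K ∨ j ≤ K) →
        |q k j - q' k j| ≤ C * S18.Ssum m K q') := by
    intro K
    by_cases hK : K ≤ m
    · obtain ⟨C, hC0, hC⟩ := S18.diff_bound m ε M hε0 hM1' K hK K
      exact ⟨C, hC0, fun _ => hC⟩
    · exact ⟨0, le_rfl, fun h => absurd h hK⟩
  choose CF hCF0 hCF using hex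
  refine ⟨2 + ∑ K ∈ Finset.range (m + 1), ((K : ℝ) + 1) * CF K, ?_, ?_⟩
  · have h0 : 0 ≤ ∑ K ∈ Finset.range (m + 1), ((K : ℝ) + 1) * CF K :=
      Finset.sum_nonneg fun K _ => mul_nonneg (by positivity) (hCF0 K)
    linarith
  · intro q0 q1 q q' hq0 hpair hice hpairs' hqb' k hk1 hkm
    have h5 : ∀ k j, 1 ≤ k → k ≤ m → j ≤ k → |q k j| ≤ M := fun k j hk hkm' hj =>
      le_trans (hM1 q0 q1 q hq0 hpair hice k j hk hkm' hj) (le_max_left _ _)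
    have h6 : ∀ k j, 1 ≤ k → k ≤ m → j ≤ k → |q' k j| ≤ M := fun k j hk hkm' hj =>
      le_trans (hqb' k hk hkm' j hj) (le_max_right _ _)
    have hdiff : ∀ j ≤ k, |q k j - q' k j| ≤ CF k * S18.Ssum m k q' := fun j hj =>
      hCF k hkm q0 q1 q q' hq0 hice hpairs' h5 h6 k j hk1 le_rfl hj (Or.inr hj)
    have hS0 : 0 ≤ S18.Ssum m k q' := S18.Ssum_nonneg m k q'
    refine le_trans (S18.sqrt_sum_sq_le (Finset.range (k + 1)) fun j => q k j - q' k j) ?_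
    have hsum : ∑ j ∈ Finset.range (k + 1), |q k j - q' k j|
        ≤ ((k : ℝ) + 1) * (CF k * S18.Ssum m k q') := by
      refine le_trans (Finset.sum_le_sum fun j hj =>
        hdiff j (by simpa [Nat.lt_succ_iff] using Finset.mem_range.mp hj)) ?_
      rw [Finset.sum_const, Finset.card_range, nsmul_eq_mul]
      push_cast
      exact le_rfl
    refine le_trans hsum ?_
    have hterm : ((k : ℝ) + 1) * CF k
        ≤ 2 + ∑ K ∈ Finset.range (m + 1), ((K : ℝ) + 1) * CF K := by
      have h1 : ((k : ℝ) + 1) * CF k ≤ ∑ K ∈ Finset.range (m + 1), ((K : ℝ) + 1) * CF K :=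
        Finset.single_le_sum (f := fun K : ℕ => ((K : ℝ) + 1) * CF K)
          (fun K _ => mul_nonneg (by positivity) (hCF0 K))
          (Finset.mem_range.mpr (show k < m + 1 by omega))
      linarith
    calc ((k : ℝ) + 1) * (CF k * S18.Ssum m k q')
        = (((k : ℝ) + 1) * CF k) * S18.Ssum m k q' := by ring
      _ ≤ (2 + ∑ K ∈ Finset.range (m + 1), ((K : ℝ) + 1) * CF K) * S18.Ssum m k q' :=
          mul_le_mul_of_nonneg_right hterm hS0
      _ = _ := rfl
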